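/- The composition of the Lagrangian leapfrog with the momentum (velocity) flip is an involution: let (q̃, ṽ) = Φ_ε(q, v) be the result of one Lagrangian leapfrog step of size ε from (q, v), computed via intermediate velocity v̆, and assume the four matrices Id + Ω(ε,q,v), Id + Ω(ε,q̃,v̆), Id − Ω(ε,q̃,ṽ), and Id − Ω(ε,q,v̆) are invertible. Then applying one Lagrangian leapfrog step of size ε to (q̃, −ṽ) yields exactly (q, −v); equivalently, (F ∘ Φ_ε) ∘ (F ∘ Φ_ε) = id on such points, where F(q,v) = (q,−v). -/
import Mathlib


open Matrix

/-- The Christoffel symbols `Γ^k_{ij}(q)` of the metric `G`. -/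
noncomputable def christoffel (m : ℕ) (G : (Fin m → ℝ) → Matrix (Fin m) (Fin m) ℝ)
    (k i j : Fin m) (q : Fin m → ℝ) : ℝ :=
  (1 / 2) * ∑ l, (G q)⁻¹ k l *
    (fderiv ℝ (fun x => G x l j) q (Pi.single i 1)
      + fderiv ℝ (fun x => G x l i) q (Pi.single j 1)
      - fderiv ℝ (fun x => G x i j) q (Pi.single l 1))

/-- The matrix `Ω(ε, q, v)` with entries `Ω_{ij} = (ε/2) Σ_k Γ^i_{kj}(q) v^{(k)}`. -/
noncomputable def Omega (m : ℕ) (G : (Fin m → ℝ) → Matrix (Fin m) (Fin m) ℝ)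
    (ε : ℝ) (q v : Fin m → ℝ) : Matrix (Fin m) (Fin m) ℝ :=
  Matrix.of fun i j => (ε / 2) * ∑ k, christoffel m G i k j q * v k


/-- The coordinate gradient `∇U(q)`, with `(∇U(q))_l = ∂U/∂q^{(l)}(q)`. -/
noncomputable def gradU (m : ℕ) (U : (Fin m → ℝ) → ℝ) (q : Fin m → ℝ) : Fin m → ℝ :=
  fun l => fderiv ℝ U q (Pi.single l 1)

/-- One step of the Lagrangian leapfrog integrator with step-size `ε`. -/
noncomputable def lagrangianLeapfrog (m : ℕ)
    (G : (Fin m → ℝ) → Matrix (Fin m) (Fin m) ℝ) (U : (Fin m → ℝ) → ℝ)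
    (ε : ℝ) (x : (Fin m → ℝ) × (Fin m → ℝ)) : (Fin m → ℝ) × (Fin m → ℝ) :=
  let q := x.1
  let v := x.2
  let vb := ((1 : Matrix (Fin m) (Fin m) ℝ) + Omega m G ε q v)⁻¹ *ᵥ
    (v - (ε / 2) • ((G q)⁻¹ *ᵥ gradU m U q))
  let qt := q + ε • vb
  let vt := ((1 : Matrix (Fin m) (Fin m) ℝ) + Omega m G ε qt vb)⁻¹ *ᵥ
    (vb - (ε / 2) • ((G qt)⁻¹ *ᵥ gradU m U qt))
  (qt, vt)

open Matrix

lemma christoffel_symm (m : ℕ) (G : (Fin m → ℝ) → Matrix (Fin m) (Fin m) ℝ)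
    (hsym : ∀ x i j, G x i j = G x j i) (k i j : Fin m) (q : Fin m → ℝ) :
    christoffel m G k i j q = christoffel m G k j i q := by
  unfold christoffel
  congr 1
  apply Finset.sum_congr rfl
  intro l _
  have h : (fun x => G x i j) = (fun x => G x j i) := by funext x; exact hsym x i j
  rw [h]
  ring

lemma Omega_neg (m : ℕ) (G : (Fin m → ℝ) → Matrix (Fin m) (Fin m) ℝ)
    (ε : ℝ) (q v : Fin m → ℝ) :
    Omega m G ε q (-v) = -(Omega m G ε q v) := by
  ext i j
  simp [Omega, mul_neg, Finset.sum_neg_distrib]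

lemma Omega_symm (m : ℕ) (G : (Fin m → ℝ) → Matrix (Fin m) (Fin m) ℝ)
    (hsym : ∀ x i j, G x i j = G x j i) (ε : ℝ) (q v w : Fin m → ℝ) :
    Omega m G ε q v *ᵥ w = Omega m G ε q w *ᵥ v := by
  funext i
  simp only [Omega, mulVec, dotProduct, of_apply]
  have key : ∀ a b : Fin m → ℝ,
      (∑ j, ((ε / 2) * ∑ k, christoffel m G i k j q * a k) * b j)
      = (ε / 2) * ∑ j, ∑ k, christoffel m G i k j q * a k * b j := by
    intro a b
    rw [Finset.mul_sum]
    apply Finset.sum_congr rfl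
    intro j _
    rw [mul_assoc, Finset.sum_mul]
  rw [key, key, Finset.sum_comm]
  congr 1
  apply Finset.sum_congr rfl
  intro j _
  apply Finset.sum_congr rfl
  intro k _
  rw [christoffel_symm m G hsym i k j q]
  ring

lemma inv_mulVec_solve {m : ℕ} (A : Matrix (Fin m) (Fin m) ℝ) (h : IsUnit A.det)
    (x b : Fin m → ℝ) (hx : A *ᵥ x = b) : A⁻¹ *ᵥ b = x := by
  rw [← hx, mulVec_mulVec, nonsing_inv_mul _ h, one_mulVec]

lemma mulVec_of_inv {m : ℕ} (A : Matrix (Fin m) (Fin m) ℝ) (h : IsUnit A.det)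
    (x b : Fin m → ℝ) (hx : x = A⁻¹ *ᵥ b) : A *ᵥ x = b := by
  rw [hx, mulVec_mulVec, mul_nonsing_inv _ h, one_mulVec]
/-- the composition of the Lagrangian leapfrog with the velocity flip
`F(q,v) = (q,−v)` is an involution: if `(q̃,ṽ) = Φ_ε(q,v)` (with the four relevant
matrices invertible) then `Φ_ε(q̃,−ṽ) = (q,−v)`. -/
theorem lagrangianLeapfrog_flip_involution
    (m : ℕ) (hm : 1 ≤ m)
    (G : (Fin m → ℝ) → Matrix (Fin m) (Fin m) ℝ)
    (hGsmooth : ∀ i j, ContDiff ℝ (⊤ : ℕ∞) fun q => G q i j)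
    (hGpd : ∀ q, (G q).PosDef)
    (U : (Fin m → ℝ) → ℝ) (hU : ContDiff ℝ (⊤ : ℕ∞) U)
    (ε : ℝ) (q v vb qt vt : Fin m → ℝ)
    (hvb : vb = ((1 : Matrix (Fin m) (Fin m) ℝ) + Omega m G ε q v)⁻¹ *ᵥ
      (v - (ε / 2) • ((G q)⁻¹ *ᵥ gradU m U q)))
    (hqt : qt = q + ε • vb)
    (hvt : vt = ((1 : Matrix (Fin m) (Fin m) ℝ) + Omega m G ε qt vb)⁻¹ *ᵥ
      (vb - (ε / 2) • ((G qt)⁻¹ *ᵥ gradU m U qt)))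
    (h1 : IsUnit ((1 : Matrix (Fin m) (Fin m) ℝ) + Omega m G ε q v).det)
    (h2 : IsUnit ((1 : Matrix (Fin m) (Fin m) ℝ) + Omega m G ε qt vb).det)
    (h3 : IsUnit ((1 : Matrix (Fin m) (Fin m) ℝ) - Omega m G ε qt vt).det)
    (h4 : IsUnit ((1 : Matrix (Fin m) (Fin m) ℝ) - Omega m G ε q vb).det) :
    lagrangianLeapfrog m G U ε (qt, -vt) = (q, -v) := by
  have hsym : ∀ x i j, G x i j = G x j i := by
    intro x i j
    have h := (hGpd x).isHermitian
    have := congrFun (congrFun h j) i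
    simpa [Matrix.conjTranspose_apply] using this
  have E2 : ((1 : Matrix (Fin m) (Fin m) ℝ) + Omega m G ε q v) *ᵥ vb
      = v - (ε / 2) • ((G q)⁻¹ *ᵥ gradU m U q) := mulVec_of_inv _ h1 _ _ hvb
  have E1 : ((1 : Matrix (Fin m) (Fin m) ℝ) + Omega m G ε qt vb) *ᵥ vt
      = vb - (ε / 2) • ((G qt)⁻¹ *ᵥ gradU m U qt) := mulVec_of_inv _ h2 _ _ hvt
  rw [add_mulVec, one_mulVec] at E1 E2
  have hO1 : Omega m G ε qt vb *ᵥ vt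
      = vb - (ε / 2) • ((G qt)⁻¹ *ᵥ gradU m U qt) - vt := by
    rw [← E1]; abel
  have hO2 : Omega m G ε q v *ᵥ vb
      = v - (ε / 2) • ((G q)⁻¹ *ᵥ gradU m U q) - vb := by
    rw [← E2]; abel
  have hA : ((1 : Matrix (Fin m) (Fin m) ℝ) + Omega m G ε qt (-vt))⁻¹ *ᵥ
      (-vt - (ε / 2) • ((G qt)⁻¹ *ᵥ gradU m U qt)) = -vb := by
    rw [Omega_neg, ← sub_eq_add_neg]
    apply inv_mulVec_solve _ h3
    rw [sub_mulVec, one_mulVec, mulVec_neg, Omega_symm m G hsym, hO1]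
    abel
  have hq : qt + ε • (-vb) = q := by
    rw [hqt]; rw [smul_neg]; abel
  have hC : ((1 : Matrix (Fin m) (Fin m) ℝ) + Omega m G ε q (-vb))⁻¹ *ᵥ
      (-vb - (ε / 2) • ((G q)⁻¹ *ᵥ gradU m U q)) = -v := by
    rw [Omega_neg, ← sub_eq_add_neg]
    apply inv_mulVec_solve _ h4
    rw [sub_mulVec, one_mulVec, mulVec_neg, Omega_symm m G hsym, hO2]
    abel
  simp only [lagrangianLeapfrog]
  rw [hA, hq, hC]
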